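/- arXiv:math/0610763 — 2 statements merged into one kernel-verified Lean document; each statement's English description precedes it below -/
import Mathlib

section
/- Let (S_n)_{n∈ℕ} be a symmetric, square integrable random walk in ℤ² starting at 0. Then the series ∑_{n=0}^{∞} P[S_n = 0] diverges, i.e., ∑_{n=0}^{∞} P[S_n = 0] = +∞. -/
open MeasureTheory ProbabilityTheory

open scoped ENNReal

/-!
Write `pₙ(x) = P[Sₙ = x]`. The increment `S₂ₙ - Sₙ` is independent of `Sₙ` and has the law of
`Sₙ`, hence by symmetry that of `-Sₙ`; so `P[S₂ₙ = 0] ≥ ∑_{x ∈ B} pₙ(x)²` for every finite `B`.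
The variance of each coordinate of `Sₙ` is linear in `n`, so by Chebyshev's inequality a box `B`
with `O(n)` lattice points carries half of the mass of `pₙ`, and Cauchy–Schwarz gives
`P[S₂ₙ = 0] ≥ (∑_{x ∈ B} pₙ(x))² / #B ≥ c / n`. The harmonic series diverges.
-/

lemma ENNReal.tsum_eq_top_of_ofReal_div_le {a : ℕ → ℝ≥0∞} {c : ℝ} (hc : 0 < c)
    (h : ∀ n : ℕ, 1 ≤ n → ENNReal.ofReal (c / n) ≤ a n) : ∑' n, a n = ∞ := by
  by_contra hfin
  have hsum : Summable fun n => (a (n + 1)).toReal :=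
    (summable_nat_add_iff 1).2 (ENNReal.summable_toReal hfin)
  have hharm : Summable fun n : ℕ => c / ((n + 1 : ℕ) : ℝ) :=
    hsum.of_nonneg_of_le (fun n => by positivity) fun n =>
      (ENNReal.ofReal_le_iff_le_toReal (ENNReal.ne_top_of_tsum_ne_top hfin _)).1 (h _ le_add_self)
  refine Real.not_summable_one_div_natCast ((summable_nat_add_iff 1).1 ?_)
  simpa [div_div_cancel_left' hc.ne'] using hharm.div_const c

lemma AddMonoidHom.comp_finsetSum {ι Ω G H : Type*} [AddCommMonoid G] [AddCommMonoid H]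
    (φ : G →+ H) (X : ι → Ω → G) (s : Finset ι) : φ ∘ ∑ k ∈ s, X k = ∑ k ∈ s, φ ∘ X k := by
  ext ω
  simp [Finset.sum_apply]

namespace ProbabilityTheory

variable {Ω G : Type*} {mΩ : MeasurableSpace Ω} {μ : Measure Ω} [MeasurableSpace G]

lemma memLp_two_of_integrable_sq_add_sq {f g : Ω → ℝ} (hf : AEStronglyMeasurable f μ)
    (h : Integrable (fun ω => f ω ^ 2 + g ω ^ 2) μ) : MemLp f 2 μ :=
  (memLp_two_iff_integrable_sq hf).2 <| h.mono' (hf.pow 2) <| ae_of_all _ fun ω => by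
    simp only [norm_pow, Real.norm_eq_abs, sq_abs]
    nlinarith [sq_nonneg (g ω)]

lemma iIndepFun.variance_sum_range {Y : ℕ → Ω → ℝ} (hY : iIndepFun Y μ)
    (hident : ∀ k, IdentDistrib (Y k) (Y 0) μ μ) (hY₀ : MemLp (Y 0) 2 μ) (n : ℕ) :
    Var[∑ k ∈ Finset.range n, Y k; μ] = n * Var[Y 0; μ] := by
  rw [IndepFun.variance_sum (fun k _ => (hident k).symm.memLp_snd hY₀)
    (fun i _ j _ hij => hY.indepFun hij)]
  simp [(hident _).variance_eq]

lemma exists_finset_int_card_le_measureReal_notMem_le [IsFiniteMeasure μ] {Y : Ω → ℤ}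
    (hY : MemLp (fun ω => (Y ω : ℝ)) 2 μ) {v : ℝ} (hv : 1 ≤ v)
    (hvar : Var[fun ω => (Y ω : ℝ); μ] ≤ v) :
    ∃ I : Finset ℤ, (I.card : ℝ) ≤ 5 * √v ∧ μ.real {ω | Y ω ∉ I} ≤ 1 / 4 := by
  set m := μ[fun ω => (Y ω : ℝ)]
  -- the radius `2√v` makes Chebyshev's bound `v / (2√v)²` equal to `1/4`
  set c := 2 * √v
  have hsqrt : 1 ≤ √v := Real.one_le_sqrt.2 hv
  have hc : 0 < c := by positivity
  refine ⟨Finset.Icc ⌈m - c⌉ ⌊m + c⌋, ?card, ?mass⟩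
  case card =>
    rw [Int.card_Icc]
    rcases le_or_gt (⌊m + c⌋ + 1 - ⌈m - c⌉) 0 with hneg | hpos
    · rw [Int.toNat_eq_zero.2 hneg, Nat.cast_zero]
      positivity
    · rw [← Int.cast_natCast, Int.toNat_of_nonneg hpos.le]
      push_cast
      linarith [Int.floor_le (m + c), Int.le_ceil (m - c)]
  case mass =>
    have hsub : {ω | Y ω ∉ Finset.Icc ⌈m - c⌉ ⌊m + c⌋} ⊆ {ω | c ≤ |(Y ω : ℝ) - m|} := by
      intro ω hω
      simp only [Set.mem_ofPred_eq, Finset.mem_Icc, Int.ceil_le, Int.le_floor, not_and_or,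
        not_le] at hω ⊢
      rcases hω with h | h
      · rw [abs_sub_comm]; exact le_abs.2 (Or.inl (by linarith))
      · exact le_abs.2 (Or.inl (by linarith))
    have hcheb := (measure_mono hsub).trans (meas_ge_le_variance_div_sq hY hc)
    refine ENNReal.toReal_le_of_le_ofReal (by norm_num) (hcheb.trans (ENNReal.ofReal_le_ofReal ?_))
    rw [div_le_iff₀ (by positivity), mul_pow, Real.sq_sqrt (by linarith)]
    linarith

lemma exists_finset_card_le_measureReal_preimage_ge [IsProbabilityMeasure μ] {Z : Ω → ℤ × ℤ}
    (hZ : Measurable Z) (h₁ : MemLp (fun ω => ((Z ω).1 : ℝ)) 2 μ)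
    (h₂ : MemLp (fun ω => ((Z ω).2 : ℝ)) 2 μ) {v : ℝ} (hv : 1 ≤ v)
    (hvar₁ : Var[fun ω => ((Z ω).1 : ℝ); μ] ≤ v) (hvar₂ : Var[fun ω => ((Z ω).2 : ℝ); μ] ≤ v) :
    ∃ B : Finset (ℤ × ℤ), (B.card : ℝ) ≤ 25 * v ∧ 1 / 2 ≤ μ.real (Z ⁻¹' B) := by
  obtain ⟨I₁, hcard₁, hmass₁⟩ := exists_finset_int_card_le_measureReal_notMem_le h₁ hv hvar₁
  obtain ⟨I₂, hcard₂, hmass₂⟩ := exists_finset_int_card_le_measureReal_notMem_le h₂ hv hvar₂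
  refine ⟨I₁ ×ˢ I₂, ?_, ?_⟩
  · calc ((I₁ ×ˢ I₂).card : ℝ) = I₁.card * I₂.card := by simp
      _ ≤ (5 * √v) * (5 * √v) := by gcongr
      _ = 25 * v := by rw [mul_mul_mul_comm, Real.mul_self_sqrt (by linarith)]; ring
  · have hcompl : (Z ⁻¹' ↑(I₁ ×ˢ I₂))ᶜ ⊆ {ω | (Z ω).1 ∉ I₁} ∪ {ω | (Z ω).2 ∉ I₂} := by
      intro ω hω
      simp only [Set.mem_compl_iff, Set.mem_preimage, Finset.coe_product, Set.mem_prod,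
        Finset.mem_coe, not_and_or] at hω
      exact hω
    have := (measureReal_mono (μ := μ) hcompl).trans (measureReal_union_le _ _)
    rw [measureReal_compl (hZ (Finset.measurableSet _)), probReal_univ] at this
    linarith

lemma sum_measureReal_sq_le_measureReal_add_eq_zero [AddGroup G] [MeasurableSingletonClass G]
    [IsFiniteMeasure μ] {U V : Ω → G} (hU : Measurable U) (hV : Measurable V)
    (hUV : IndepFun U V μ) (hVU : IdentDistrib V (-U) μ μ) (B : Finset G) :
    ∑ x ∈ B, μ.real (U ⁻¹' {x}) ^ 2 ≤ μ.real {ω | U ω + V ω = 0} := by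
  have hfiber : ∀ x, μ.real (U ⁻¹' {x}) ^ 2 = μ.real (U ⁻¹' {x} ∩ V ⁻¹' {-x}) := fun x => by
    have hV_eq : μ.real (V ⁻¹' {-x}) = μ.real (U ⁻¹' {x}) := by
      rw [measureReal_def, measureReal_def, hVU.measure_mem_eq (measurableSet_singleton _)]
      simp [Set.preimage, neg_eq_iff_eq_neg]
    rw [measureReal_def, measureReal_def, hUV.measure_inter_preimage_eq_mul _ _
      (measurableSet_singleton _) (measurableSet_singleton _), ENNReal.toReal_mul,
      ← measureReal_def, ← measureReal_def, hV_eq, sq]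
  calc ∑ x ∈ B, μ.real (U ⁻¹' {x}) ^ 2
      = μ.real (⋃ x ∈ B, U ⁻¹' {x} ∩ V ⁻¹' {-x}) := by
        rw [measureReal_biUnion_finset]
        · exact Finset.sum_congr rfl fun x _ => hfiber x
        · exact fun x _ y _ hxy => Disjoint.inter_left _ <| Disjoint.inter_right _ <|
            (Set.disjoint_singleton.2 hxy).preimage U
        · exact fun x _ => (hU (measurableSet_singleton _)).inter (hV (measurableSet_singleton _))
    _ ≤ μ.real {ω | U ω + V ω = 0} := by
        refine measureReal_mono ?_
        simp only [Set.subset_def, Set.mem_iUnion, Set.mem_inter_iff, Set.mem_preimage,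
          Set.mem_singleton_iff, Set.mem_ofPred_eq]
        rintro ω ⟨x, -, hUx, hVx⟩
        rw [hUx, hVx, add_neg_cancel]

section AddCommMonoid

variable [AddCommMonoid G] {X : ℕ → Ω → G}

lemma memLp_comp_sum_range (φ : G →+ ℝ) (hφ : Measurable φ)
    (hident : ∀ k, IdentDistrib (X k) (X 0) μ μ) (h₀ : MemLp (φ ∘ X 0) 2 μ) (n : ℕ) :
    MemLp (φ ∘ ∑ k ∈ Finset.range n, X k) 2 μ := by
  rw [AddMonoidHom.comp_finsetSum]
  exact memLp_finsetSum' _ fun k _ => ((hident k).comp hφ).symm.memLp_snd h₀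

lemma variance_comp_sum_range (φ : G →+ ℝ) (hφ : Measurable φ) (hX : iIndepFun X μ)
    (hident : ∀ k, IdentDistrib (X k) (X 0) μ μ) (h₀ : MemLp (φ ∘ X 0) 2 μ) (n : ℕ) :
    Var[φ ∘ ∑ k ∈ Finset.range n, X k; μ] = n * Var[φ ∘ X 0; μ] := by
  rw [AddMonoidHom.comp_finsetSum]
  exact (hX.comp (fun _ => φ) fun _ => hφ).variance_sum_range (fun k => (hident k).comp hφ) h₀ n

variable [MeasurableAdd₂ G]

lemma IdentDistrib.sum_range {Ω' : Type*} {mΩ' : MeasurableSpace Ω'} {ν : Measure Ω'}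
    {Y : ℕ → Ω' → G} (h : ∀ k, IdentDistrib (X k) (Y k) μ ν) (hX : iIndepFun X μ)
    (hY : iIndepFun Y ν) (n : ℕ) :
    IdentDistrib (∑ k ∈ Finset.range n, X k) (∑ k ∈ Finset.range n, Y k) μ ν := by
  have hsum : Measurable fun v : ℕ → G => ∑ k ∈ Finset.range n, v k :=
    Finset.measurable_sum _ fun k _ => measurable_pi_apply k
  convert (IdentDistrib.pi h hX hY).comp hsum using 1 <;> ext ω <;> simp [Finset.sum_apply]

lemma iIndepFun.indepFun_sum_sum_of_disjoint {ι : Type*} {X : ι → Ω → G} (hX : iIndepFun X μ)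
    (hmeas : ∀ k, Measurable (X k)) {s t : Finset ι} (hst : Disjoint s t) :
    IndepFun (∑ k ∈ s, X k) (∑ k ∈ t, X k) μ := by
  have hsum : ∀ u : Finset ι, Measurable fun v : u → G => ∑ k, v k :=
    fun u => Finset.measurable_sum _ fun k _ => measurable_pi_apply k
  convert (hX.indepFun_finset s t hst hmeas).comp (hsum s) (hsum t) using 1 <;> ext ω <;>
    simp only [Finset.sum_apply, Function.comp_apply] <;> exact (Finset.sum_coe_sort _ _).symm

lemma identDistrib_sum_Ico_sum_range (hX : iIndepFun X μ)
    (hident : ∀ k, IdentDistrib (X k) (X 0) μ μ) (m n : ℕ) :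
    IdentDistrib (∑ k ∈ Finset.Ico m (m + n), X k) (∑ k ∈ Finset.range n, X k) μ μ := by
  rw [Finset.sum_Ico_eq_sum_range, Nat.add_sub_cancel_left]
  exact IdentDistrib.sum_range (fun k => (hident (m + k)).trans (hident k).symm)
    (hX.precomp (add_right_injective m)) hX n

end AddCommMonoid

section AddCommGroup

variable [AddCommGroup G] [MeasurableAdd₂ G] [MeasurableNeg G] {X : ℕ → Ω → G}

lemma identDistrib_sum_range_neg (hX : iIndepFun X μ)
    (hident : ∀ k, IdentDistrib (X k) (X 0) μ μ) (hsymm : IdentDistrib (X 0) (-X 0) μ μ)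
    (n : ℕ) : IdentDistrib (∑ k ∈ Finset.range n, X k) (-∑ k ∈ Finset.range n, X k) μ μ := by
  have hXneg : ∀ k, IdentDistrib (X k) (-X k) μ μ := fun k =>
    (hident k).trans (hsymm.trans ((hident k).comp measurable_neg).symm)
  rw [← Finset.sum_neg_distrib]
  exact IdentDistrib.sum_range hXneg hX (hX.comp (fun _ => Neg.neg) fun _ => measurable_neg) n

lemma sum_measureReal_sq_le_measureReal_sum_range_two_mul_eq_zero [MeasurableSingletonClass G]
    (hmeas : ∀ k, Measurable (X k)) (hX : iIndepFun X μ)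
    (hident : ∀ k, IdentDistrib (X k) (X 0) μ μ) (hsymm : IdentDistrib (X 0) (-X 0) μ μ)
    (n : ℕ) (B : Finset G) :
    ∑ x ∈ B, μ.real ((∑ k ∈ Finset.range n, X k) ⁻¹' {x}) ^ 2 ≤
      μ.real {ω | (∑ k ∈ Finset.range (2 * n), X k) ω = 0} := by
  have := hX.isProbabilityMeasure
  have hsplit : ∑ k ∈ Finset.range (2 * n), X k =
      ∑ k ∈ Finset.range n, X k + ∑ k ∈ Finset.Ico n (n + n), X k := by
    rw [two_mul, Finset.sum_range_add_sum_Ico _ (Nat.le_add_right n n)]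
  have hindep := hX.indepFun_sum_sum_of_disjoint hmeas (s := Finset.range n)
    (t := Finset.Ico n (n + n))
    (by rw [Finset.range_eq_Ico]; exact Finset.Ico_disjoint_Ico_consecutive ..)
  have hmeas_sum : ∀ s : Finset ℕ, Measurable (∑ k ∈ s, X k) := fun s => by fun_prop
  simpa only [hsplit, Pi.add_apply] using sum_measureReal_sq_le_measureReal_add_eq_zero
    (hmeas_sum _) (hmeas_sum _) hindep ((identDistrib_sum_Ico_sum_range hX hident n n).trans
      (identDistrib_sum_range_neg hX hident hsymm n)) B

end AddCommGroup

section IntegerLattice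

variable {X : ℕ → Ω → ℤ × ℤ}

lemma exists_finset_card_le_measureReal_sum_range_ge (hmeas : ∀ k, Measurable (X k))
    (hX : iIndepFun X μ) (hident : ∀ k, IdentDistrib (X k) (X 0) μ μ)
    (hsq : Integrable (fun ω => ((X 0 ω).1 : ℝ) ^ 2 + ((X 0 ω).2 : ℝ) ^ 2) μ) :
    ∃ D > 0, ∀ n : ℕ, 1 ≤ n → ∃ B : Finset (ℤ × ℤ),
      (B.card : ℝ) ≤ D * n ∧ 1 / 2 ≤ μ.real ((∑ k ∈ Finset.range n, X k) ⁻¹' B) := by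
  have := hX.isProbabilityMeasure
  let φ₁ : ℤ × ℤ →+ ℝ := (Int.castAddHom ℝ).comp (AddMonoidHom.fst ℤ ℤ)
  let φ₂ : ℤ × ℤ →+ ℝ := (Int.castAddHom ℝ).comp (AddMonoidHom.snd ℤ ℤ)
  have hφ₁ : Measurable φ₁ := measurable_of_countable _
  have hφ₂ : Measurable φ₂ := measurable_of_countable _
  have h₁ : MemLp (φ₁ ∘ X 0) 2 μ :=
    memLp_two_of_integrable_sq_add_sq (hφ₁.comp (hmeas 0)).aestronglyMeasurable hsq
  have h₂ : MemLp (φ₂ ∘ X 0) 2 μ := memLp_two_of_integrable_sq_add_sq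
    (f := fun ω => ((X 0 ω).2 : ℝ)) (hφ₂.comp (hmeas 0)).aestronglyMeasurable
    (by simpa only [add_comm] using hsq)
  set V := Var[φ₁ ∘ X 0; μ] + Var[φ₂ ∘ X 0; μ] + 1
  have hV₁ : Var[φ₁ ∘ X 0; μ] ≤ V := by linarith [variance_nonneg (φ₂ ∘ X 0) μ]
  have hV₂ : Var[φ₂ ∘ X 0; μ] ≤ V := by linarith [variance_nonneg (φ₁ ∘ X 0) μ]
  have hV : 1 ≤ V := by linarith [variance_nonneg (φ₁ ∘ X 0) μ, variance_nonneg (φ₂ ∘ X 0) μ]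
  refine ⟨25 * V, by positivity, fun n hn => ?_⟩
  have hn' : (1 : ℝ) ≤ n := by exact_mod_cast hn
  obtain ⟨B, hcard, hmass⟩ := exists_finset_card_le_measureReal_preimage_ge
    (Z := ∑ k ∈ Finset.range n, X k) (v := n * V) (by fun_prop)
    (memLp_comp_sum_range φ₁ hφ₁ hident h₁ n) (memLp_comp_sum_range φ₂ hφ₂ hident h₂ n)
    (one_le_mul_of_one_le_of_one_le hn' hV)
    (by change Var[φ₁ ∘ ∑ k ∈ Finset.range n, X k; μ] ≤ _
        rw [variance_comp_sum_range φ₁ hφ₁ hX hident h₁]; gcongr)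
    (by change Var[φ₂ ∘ ∑ k ∈ Finset.range n, X k; μ] ≤ _
        rw [variance_comp_sum_range φ₂ hφ₂ hX hident h₂]; gcongr)
  exact ⟨B, by linarith, hmass⟩

lemma exists_div_le_measureReal_sum_range_two_mul_eq_zero (hmeas : ∀ k, Measurable (X k))
    (hX : iIndepFun X μ) (hident : ∀ k, IdentDistrib (X k) (X 0) μ μ)
    (hsymm : IdentDistrib (X 0) (-X 0) μ μ)
    (hsq : Integrable (fun ω => ((X 0 ω).1 : ℝ) ^ 2 + ((X 0 ω).2 : ℝ) ^ 2) μ) :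
    ∃ c > 0, ∀ n : ℕ, 1 ≤ n →
      c / n ≤ μ.real {ω | (∑ k ∈ Finset.range (2 * n), X k) ω = 0} := by
  have := hX.isProbabilityMeasure
  obtain ⟨D, hD, hconc⟩ := exists_finset_card_le_measureReal_sum_range_ge hmeas hX hident hsq
  refine ⟨1 / (4 * D), by positivity, fun n hn => ?_⟩
  obtain ⟨B, hcard, hmass⟩ := hconc n hn
  set p : ℤ × ℤ → ℝ := fun x => μ.real ((∑ k ∈ Finset.range n, X k) ⁻¹' {x})
  have hmass' : 1 / 2 ≤ ∑ x ∈ B, p x := by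
    rwa [sum_measureReal_preimage_singleton B fun _ _ => (by fun_prop : Measurable _)
      (measurableSet_singleton _)]
  have key : 1 / 4 ≤ D * n * μ.real {ω | (∑ k ∈ Finset.range (2 * n), X k) ω = 0} :=
    calc 1 / 4 ≤ (∑ x ∈ B, p x) ^ 2 := by nlinarith
      _ ≤ B.card * ∑ x ∈ B, p x ^ 2 := sq_sum_le_card_mul_sum_sq
      _ ≤ D * n * μ.real {ω | (∑ k ∈ Finset.range (2 * n), X k) ω = 0} :=
        mul_le_mul hcard (sum_measureReal_sq_le_measureReal_sum_range_two_mul_eq_zero hmeas hX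
          hident hsymm n B) (Finset.sum_nonneg fun x _ => sq_nonneg (p x)) (by positivity)
  have hn' : (0 : ℝ) < n := by exact_mod_cast hn
  rw [div_div, div_le_iff₀ (by positivity)]
  linarith

end IntegerLattice

end ProbabilityTheory

theorem sum_prob_return_eq_top_general
    {Ω : Type*} [MeasurableSpace Ω] (μ : Measure Ω)
    (X : ℕ → Ω → ℤ × ℤ)
    (hmeas : ∀ n, Measurable (X n))
    (hindep : iIndepFun X μ)
    (hident : ∀ n, IdentDistrib (X n) (X 0) μ μ)
    (hsq : Integrable (fun ω => ((X 0 ω).1 : ℝ) ^ 2 + ((X 0 ω).2 : ℝ) ^ 2) μ)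
    (hsymm : Measure.map (X 0) μ = Measure.map (fun ω => -(X 0 ω)) μ)
    (S : ℕ → Ω → ℤ × ℤ)
    (hS : ∀ n ω, S n ω = ∑ k ∈ Finset.range n, X k ω) :
    ∑' n : ℕ, μ {ω | S n ω = 0} = ⊤ := by
  obtain rfl : S = fun n => ∑ k ∈ Finset.range n, X k := by
    funext n ω
    rw [hS, Finset.sum_apply]
  obtain ⟨c, hc, hreturn⟩ := exists_div_le_measureReal_sum_range_two_mul_eq_zero hmeas hindep
    hident ⟨(hmeas 0).aemeasurable, (hmeas 0).neg.aemeasurable, hsymm⟩ hsq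
  refine top_unique <| calc
    ∞ = ∑' n, μ {ω | (∑ k ∈ Finset.range (2 * n), X k) ω = 0} :=
      (ENNReal.tsum_eq_top_of_ofReal_div_le hc fun n hn =>
        ENNReal.ofReal_le_of_le_toReal (hreturn n hn)).symm
    _ ≤ _ := ENNReal.tsum_comp_le_tsum_of_injective (mul_right_injective₀ two_ne_zero) _

/-- For a symmetric, square integrable random walk in ℤ² starting at 0,
the series ∑ₙ P[Sₙ = 0] diverges. -/
theorem sum_prob_return_eq_top
    {Ω : Type*} [MeasurableSpace Ω] (μ : Measure Ω) [IsProbabilityMeasure μ]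
    (X : ℕ → Ω → ℤ × ℤ)
    (hmeas : ∀ n, Measurable (X n))
    (hindep : iIndepFun X μ)
    (hident : ∀ n, IdentDistrib (X n) (X 0) μ μ)
    (hsq : Integrable (fun ω => ((X 0 ω).1 : ℝ) ^ 2 + ((X 0 ω).2 : ℝ) ^ 2) μ)
    (hsymm : Measure.map (X 0) μ = Measure.map (fun ω => -(X 0 ω)) μ)
    (S : ℕ → Ω → ℤ × ℤ)
    (hS : ∀ n ω, S n ω = ∑ k ∈ Finset.range n, X k ω) :
    ∑' n : ℕ, μ {ω | S n ω = 0} = ⊤ :=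
  sum_prob_return_eq_top_general μ X hmeas hindep hident hsq hsymm S hS
end

section
/- Let (X_k)_{k≥1} be a sequence of independent and identically distributed ℤ²-valued random variables with E(‖X_1‖₂²) < ∞ and such that X_1 and −X_1 have the same distribution, and set S_n = X_1 + X_2 + ⋯ + X_n. Then there exist a constant C > 0 and an integer N such that for all n ≥ N, P[S_{2n} = 0] ≥ C/n. -/
/-!
Splitting `S_{2n}` into two independent halves, each distributed as `S_n` (the second one up to
a sign, by symmetry), gives `P[S_{2n} = 0] = ∑ₓ P[S_n = x]²`. By Chebyshev's inequality in each
coordinate, `S_n` lies with probability at least `1/2` in a box of side `O(√n)`, which has `O(n)`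
lattice points, and Cauchy–Schwarz over that box bounds `∑ₓ P[S_n = x]²` below by a multiple
of `1/n`.
-/

open MeasureTheory ProbabilityTheory Filter ENNReal
open Finset

section

variable {Ω : Type*} [MeasurableSpace Ω] {μ : Measure Ω}

section Collision

variable {G : Type*} [MeasurableSpace G] [MeasurableSingletonClass G]

lemma sq_measure_le_card_mul_sum_sq (ν : Measure G) [IsFiniteMeasure ν] (s : Finset G) :
    ν s ^ 2 ≤ #s * ∑ x ∈ s, ν {x} ^ 2 := by
  have h := ENNReal.coe_le_coe.2 <|
    sq_sum_le_card_mul_sum_sq (s := s) (f := fun x => (ν {x}).toNNReal)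
  push_cast at h
  simpa only [sum_measure_singleton, ENNReal.coe_toNNReal (measure_ne_top ν _)] using h

lemma inv_four_mul_card_le_tsum_sq (ν : Measure G) [IsFiniteMeasure ν] {s : Finset G}
    (hs : 1 / 2 ≤ ν s) : (4 * #s : ℝ≥0∞)⁻¹ ≤ ∑' x, ν {x} ^ 2 := by
  have hs0 : s.Nonempty := by
    by_contra h
    simp [not_nonempty_iff_eq_empty.1 h] at hs
  rw [ENNReal.inv_le_iff_le_mul (fun _ => by simp [hs0.ne_empty])
    fun h => absurd h (ENNReal.mul_ne_top ENNReal.ofNat_ne_top (ENNReal.natCast_ne_top _))]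
  calc (1 : ℝ≥0∞) = 4 * (1 / 2) ^ 2 := by
        rw [one_div, ← ENNReal.inv_pow, show (2 : ℝ≥0∞) ^ 2 = 4 by norm_num,
          ENNReal.mul_inv_cancel (by norm_num) (by norm_num)]
    _ ≤ 4 * ν s ^ 2 := by gcongr
    _ ≤ 4 * (#s * ∑ x ∈ s, ν {x} ^ 2) := by gcongr; exact sq_measure_le_card_mul_sum_sq ν s
    _ ≤ 4 * #s * ∑' x, ν {x} ^ 2 := by rw [mul_assoc]; gcongr; exact ENNReal.sum_le_tsum s

variable [AddGroup G] [Countable G]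

lemma measure_add_eq_zero_eq_tsum_sq {A B : Ω → G} (hA : Measurable A) (hB : Measurable B)
    (hAB : IndepFun A B μ) (hlaw : IdentDistrib A (fun ω => -B ω) μ μ) :
    μ {ω | A ω + B ω = 0} = ∑' x, μ.map A {x} ^ 2 := by
  have hunion : {ω | A ω + B ω = 0} = ⋃ x, A ⁻¹' {x} ∩ B ⁻¹' {-x} := by
    ext ω
    simp [add_eq_zero_iff_eq_neg, eq_comm (a := B ω), neg_eq_iff_eq_neg]
  rw [hunion, measure_iUnion]
  · congr 1 with x
    rw [hAB.measure_inter_preimage_eq_mul _ _ (measurableSet_singleton _)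
      (measurableSet_singleton _), Measure.map_apply hA (measurableSet_singleton _), sq]
    rw [hlaw.measure_mem_eq (measurableSet_singleton x)]
    congr 2 with ω
    simp [neg_eq_iff_eq_neg]
  · intro x y hxy
    exact Disjoint.mono Set.inter_subset_left Set.inter_subset_left
      ((Set.disjoint_singleton.2 hxy).preimage A)
  · exact fun x => (hA (measurableSet_singleton x)).inter (hB (measurableSet_singleton _))

end Collision

section IndependentSums

variable {ι β : Type*} [AddCommMonoid β] [MeasurableSpace β] [MeasurableAdd₂ β]

lemma ProbabilityTheory.iIndepFun.indepFun_finsetSum_finsetSum {X : ι → Ω → β}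
    (hindep : iIndepFun X μ) (hmeas : ∀ i, Measurable (X i)) {s t : Finset ι} (hst : Disjoint s t) :
    IndepFun (fun ω => ∑ i ∈ s, X i ω) (fun ω => ∑ i ∈ t, X i ω) μ := by
  have h := (hindep.indepFun_finset s t hst hmeas).comp
    (univ.measurable_sum fun i _ => measurable_pi_apply i)
    (univ.measurable_sum fun i _ => measurable_pi_apply i)
  convert h using 1 <;> ext ω <;> exact (sum_coe_sort _ (fun i => X i ω)).symm

end IndependentSums

section Variance

lemma integral_eq_zero_of_identDistrib_neg {Y : Ω → ℝ}
    (h : IdentDistrib Y (fun ω => -Y ω) μ μ) : μ[Y] = 0 := by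
  have h' := h.integral_eq
  rwa [integral_neg, self_eq_neg] at h'

lemma variance_sum_range_of_identDistrib [IsFiniteMeasure μ] {Y : ℕ → Ω → ℝ}
    (hindep : iIndepFun Y μ) (hident : ∀ k, IdentDistrib (Y k) (Y 0) μ μ) (hY : MemLp (Y 0) 2 μ)
    (n : ℕ) : variance (fun ω => ∑ k ∈ range n, Y k ω) μ = n * variance (Y 0) μ := by
  have hsum := IndepFun.variance_sum (s := range n) (fun k _ => (hident k).symm.memLp_snd hY)
    fun i _ j _ hij => hindep.indepFun hij
  simp only [(hident _).variance_eq, sum_const, card_range, nsmul_eq_mul] at hsum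
  rwa [sum_fn] at hsum

end Variance

section SymmetricIID

variable {β : Type*} [AddCommGroup β] [MeasurableSpace β] [MeasurableAdd₂ β] [MeasurableNeg β]
  {X : ℕ → Ω → β}

lemma identDistrib_sum_range_neg_sum_range_add (hindep : iIndepFun X μ)
    (hident : ∀ k, IdentDistrib (X k) (X 0) μ μ)
    (hsymm : IdentDistrib (X 0) (fun ω => -X 0 ω) μ μ) (m n : ℕ) :
    IdentDistrib (fun ω => ∑ k ∈ range n, X k ω) (fun ω => -∑ k ∈ range n, X (m + k) ω) μ μ := by
  have hY : iIndepFun (fun k ω => -X (m + k) ω) μ :=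
    (hindep.precomp (add_right_injective m)).comp (fun _ => Neg.neg) fun _ => measurable_neg
  have hXY : ∀ k, IdentDistrib (X k) (fun ω => -X (m + k) ω) μ μ := fun k =>
    (hident k).trans (hsymm.trans ((hident (m + k)).symm.comp measurable_neg))
  have h := (IdentDistrib.pi hXY hindep hY).comp
    ((range n).measurable_sum fun k _ => measurable_pi_apply k)
  simpa only [Function.comp_def, sum_neg_distrib] using h

lemma measure_sum_range_two_mul_eq_zero [Countable β] [MeasurableSingletonClass β]
    (hmeas : ∀ k, Measurable (X k)) (hindep : iIndepFun X μ)
    (hident : ∀ k, IdentDistrib (X k) (X 0) μ μ)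
    (hsymm : IdentDistrib (X 0) (fun ω => -X 0 ω) μ μ) (n : ℕ) :
    μ {ω | ∑ k ∈ range (2 * n), X k ω = 0}
      = ∑' x, μ.map (fun ω => ∑ k ∈ range n, X k ω) {x} ^ 2 := by
  have hindep_blocks : IndepFun (fun ω => ∑ k ∈ range n, X k ω)
      (fun ω => ∑ k ∈ range n, X (n + k) ω) μ := by
    have h := hindep.indepFun_finsetSum_finsetSum hmeas (s := range n) (t := Ico n (2 * n))
      (by rw [range_eq_Ico]; exact Ico_disjoint_Ico_consecutive 0 n _)
    simpa only [sum_Ico_eq_sum_range, show 2 * n - n = n by omega] using h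
  simp_rw [two_mul, sum_range_add]
  exact measure_add_eq_zero_eq_tsum_sq ((range n).measurable_sum fun k _ => hmeas k)
    ((range n).measurable_sum fun k _ => hmeas (n + k)) hindep_blocks
    (identDistrib_sum_range_neg_sum_range_add hindep hident hsymm n n)

lemma measure_le_abs_sum_range_le [IsFiniteMeasure μ] {Y : ℕ → Ω → ℝ} (hindep : iIndepFun Y μ)
    (hident : ∀ k, IdentDistrib (Y k) (Y 0) μ μ)
    (hsymm : IdentDistrib (Y 0) (fun ω => -Y 0 ω) μ μ) (hY : MemLp (Y 0) 2 μ) (n : ℕ) {t : ℝ}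
    (ht : 0 < t) :
    μ {ω | t ≤ |∑ k ∈ range n, Y k ω|} ≤ ENNReal.ofReal (n * variance (Y 0) μ / t ^ 2) := by
  have hmean : μ[fun ω => ∑ k ∈ range n, Y k ω] = 0 := integral_eq_zero_of_identDistrib_neg
    (by simpa only [zero_add] using
      identDistrib_sum_range_neg_sum_range_add hindep hident hsymm 0 n)
  have hL2 : MemLp (fun ω => ∑ k ∈ range n, Y k ω) 2 μ :=
    memLp_finsetSum (range n) fun k _ => (hident k).symm.memLp_snd hY
  simpa only [hmean, sub_zero, variance_sum_range_of_identDistrib hindep hident hY] using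
    meas_ge_le_variance_div_sq hL2 ht

end SymmetricIID

section MapSum

variable {β : Type*} [AddCommGroup β] [MeasurableSpace β] {X : ℕ → Ω → β}

lemma measure_le_abs_map_sum_range_le [IsFiniteMeasure μ] (hindep : iIndepFun X μ)
    (hident : ∀ k, IdentDistrib (X k) (X 0) μ μ)
    (hsymm : IdentDistrib (X 0) (fun ω => -X 0 ω) μ μ) (φ : β →+ ℝ) (hφ : Measurable φ)
    (hX0 : MemLp (fun ω => φ (X 0 ω)) 2 μ) (n : ℕ) {t : ℝ} (ht : 0 < t) :
    μ {ω | t ≤ |φ (∑ k ∈ range n, X k ω)|}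
      ≤ ENNReal.ofReal (n * variance (fun ω => φ (X 0 ω)) μ / t ^ 2) := by
  simp only [map_sum]
  exact measure_le_abs_sum_range_le (hindep.comp (fun _ => φ) fun _ => hφ)
    (fun k => (hident k).comp hφ) (by simpa only [Function.comp_def, map_neg] using hsymm.comp hφ)
    hX0 n ht

end MapSum

lemma Nat.succ_sqrt_sq_le_four_mul {n : ℕ} (hn : 0 < n) : (Nat.sqrt n + 1) ^ 2 ≤ 4 * n := by
  have h1 : 1 ≤ Nat.sqrt n := Nat.sqrt_pos.2 hn
  have h2 := Nat.sqrt_le' n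
  nlinarith

lemma card_Ioo_neg_prod_le (t : ℕ) : #(Ioo (-(t : ℤ)) t ×ˢ Ioo (-(t : ℤ)) t) ≤ 4 * t ^ 2 := by
  rw [card_product, Int.card_Ioo]
  have : (t - -(t : ℤ) - 1).toNat ≤ 2 * t := by omega
  nlinarith

lemma four_mul_card_Ioo_neg_prod_le (c : ℕ) {n : ℕ} (hn : 0 < n) :
    4 * #(Ioo (-((c * (Nat.sqrt n + 1) : ℕ) : ℤ)) (c * (Nat.sqrt n + 1) : ℕ)
      ×ˢ Ioo (-((c * (Nat.sqrt n + 1) : ℕ) : ℤ)) (c * (Nat.sqrt n + 1) : ℕ)) ≤ 64 * c ^ 2 * n :=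
  calc _ ≤ 4 * (4 * (c * (Nat.sqrt n + 1)) ^ 2) := by gcongr; exact card_Ioo_neg_prod_le _
    _ = 16 * c ^ 2 * (Nat.sqrt n + 1) ^ 2 := by ring
    _ ≤ 16 * c ^ 2 * (4 * n) := by gcongr; exact Nat.succ_sqrt_sq_le_four_mul hn
    _ = 64 * c ^ 2 * n := by ring

lemma two_mul_mul_le_sq_mul_sqrt_succ {v : ℝ} (hv : 0 ≤ v) {c : ℕ} (hc : 2 * v ≤ c) (n : ℕ) :
    2 * n * v ≤ ((c * (Nat.sqrt n + 1) : ℕ) : ℝ) ^ 2 := by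
  have hq : (n : ℝ) ≤ (Nat.sqrt n + 1) ^ 2 := by exact_mod_cast (Nat.lt_succ_sqrt' n).le
  have hcc : (c : ℝ) ≤ c * c := by exact_mod_cast Nat.le_mul_self c
  calc 2 * n * v = n * (2 * v) := by ring
    _ ≤ (Nat.sqrt n + 1) ^ 2 * (c * c) :=
      mul_le_mul hq (hc.trans hcc) (by positivity) (by positivity)
    _ = ((c * (Nat.sqrt n + 1) : ℕ) : ℝ) ^ 2 := by push_cast; ring

lemma memLp_two_of_sq_le {f g : Ω → ℝ} (hf : AEStronglyMeasurable f μ) (hg : Integrable g μ)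
    (hfg : ∀ ω, f ω ^ 2 ≤ g ω) : MemLp f 2 μ :=
  (memLp_two_iff_integrable_sq hf).2 <| hg.mono' (hf.pow 2) <| ae_of_all _ fun ω => by
    simpa only [Real.norm_eq_abs, abs_pow, sq_abs] using hfg ω

lemma memLp_two_fst_snd_of_integrable {Z : Ω → ℤ × ℤ} (hZ : Measurable Z)
    (hsq : Integrable (fun ω => ((Z ω).1 : ℝ) ^ 2 + ((Z ω).2 : ℝ) ^ 2) μ) :
    MemLp (fun ω => ((Z ω).1 : ℝ)) 2 μ ∧ MemLp (fun ω => ((Z ω).2 : ℝ)) 2 μ :=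
  ⟨memLp_two_of_sq_le ((measurable_of_countable fun x : ℤ × ℤ => (x.1 : ℝ)).comp
      hZ).aestronglyMeasurable hsq fun _ => le_add_of_nonneg_right (sq_nonneg _),
    memLp_two_of_sq_le ((measurable_of_countable fun x : ℤ × ℤ => (x.2 : ℝ)).comp
      hZ).aestronglyMeasurable hsq fun _ => le_add_of_nonneg_left (sq_nonneg _)⟩

lemma le_abs_fst_or_le_abs_snd_of_notMem {t : ℕ} {z : ℤ × ℤ}
    (hz : z ∉ Ioo (-(t : ℤ)) t ×ˢ Ioo (-(t : ℤ)) t) :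
    (t : ℝ) ≤ |(z.1 : ℝ)| ∨ (t : ℝ) ≤ |(z.2 : ℝ)| := by
  simp only [mem_product, mem_Ioo, ← abs_lt, not_and_or, not_lt] at hz
  simpa only [← Int.cast_abs, ← Int.cast_natCast (R := ℝ), Int.cast_le] using hz

lemma half_le_map_sum_range_box [IsProbabilityMeasure μ] {X : ℕ → Ω → ℤ × ℤ}
    (hmeas : ∀ k, Measurable (X k)) (hindep : iIndepFun X μ)
    (hident : ∀ k, IdentDistrib (X k) (X 0) μ μ)
    (hsymm : IdentDistrib (X 0) (fun ω => -X 0 ω) μ μ)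
    (h₁ : MemLp (fun ω => ((X 0 ω).1 : ℝ)) 2 μ) (h₂ : MemLp (fun ω => ((X 0 ω).2 : ℝ)) 2 μ)
    (n t : ℕ) (ht : 0 < t)
    (hvar : 2 * n * (variance (fun ω => ((X 0 ω).1 : ℝ)) μ
      + variance (fun ω => ((X 0 ω).2 : ℝ)) μ) ≤ t ^ 2) :
    1 / 2 ≤ μ.map (fun ω => ∑ k ∈ range n, X k ω) ↑(Ioo (-(t : ℤ)) t ×ˢ Ioo (-(t : ℤ)) t) := by
  set S := fun ω => ∑ k ∈ range n, X k ω
  set box : Set (ℤ × ℤ) := ↑(Ioo (-(t : ℤ)) t ×ˢ Ioo (-(t : ℤ)) t)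
  have hS : Measurable S := (range n).measurable_sum fun k _ => hmeas k
  have htR : (0 : ℝ) < t := by exact_mod_cast ht
  have hcheb := fun (φ : ℤ × ℤ →+ ℤ) (hφ : MemLp (fun ω => (φ (X 0 ω) : ℝ)) 2 μ) =>
    measure_le_abs_map_sum_range_le hindep hident hsymm ((Int.castAddHom ℝ).comp φ)
      (measurable_of_countable _) hφ n htR
  have hout :
      (S ⁻¹' box)ᶜ ⊆ {ω | (t : ℝ) ≤ |((S ω).1 : ℝ)|} ∪ {ω | (t : ℝ) ≤ |((S ω).2 : ℝ)|} :=
    fun ω hω => le_abs_fst_or_le_abs_snd_of_notMem (mem_coe.not.1 hω)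
  have hnonneg : ∀ f : Ω → ℝ, 0 ≤ n * variance f μ / t ^ 2 := fun f => by
    have := variance_nonneg f μ
    positivity
  have hcompl : μ ((S ⁻¹' box)ᶜ) ≤ 1 / 2 := calc
    μ ((S ⁻¹' box)ᶜ) ≤ μ {ω | (t : ℝ) ≤ |((S ω).1 : ℝ)|} + μ {ω | (t : ℝ) ≤ |((S ω).2 : ℝ)|} :=
      (measure_mono hout).trans (measure_union_le _ _)
    _ ≤ ENNReal.ofReal (n * variance (fun ω => ((X 0 ω).1 : ℝ)) μ / t ^ 2)
        + ENNReal.ofReal (n * variance (fun ω => ((X 0 ω).2 : ℝ)) μ / t ^ 2) :=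
      add_le_add (hcheb (AddMonoidHom.fst ℤ ℤ) h₁) (hcheb (AddMonoidHom.snd ℤ ℤ) h₂)
    _ = ENNReal.ofReal (n * (variance (fun ω => ((X 0 ω).1 : ℝ)) μ
        + variance (fun ω => ((X 0 ω).2 : ℝ)) μ) / t ^ 2) := by
      rw [← ENNReal.ofReal_add (hnonneg _) (hnonneg _)]
      ring_nf
    _ ≤ ENNReal.ofReal (1 / 2) := by
      refine ENNReal.ofReal_le_ofReal ?_
      rw [div_le_iff₀ (by positivity)]
      linarith
    _ = 1 / 2 := by rw [one_div, ENNReal.ofReal_inv_of_pos two_pos, ENNReal.ofReal_ofNat, one_div]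
  rw [Measure.map_apply hS (Set.toFinite _).measurableSet]
  rw [prob_compl_eq_one_sub (hS (Set.toFinite _).measurableSet), tsub_le_iff_right] at hcompl
  rwa [← ENNReal.add_le_add_iff_left (by norm_num : (1 / 2 : ℝ≥0∞) ≠ ⊤), ENNReal.add_halves]

end

/-- For an i.i.d. symmetric square integrable ℤ²-valued sequence, there are C > 0
and N such that P[S_{2n} = 0] ≥ C / n for all n ≥ N. -/
theorem prob_return_ge_const_div
    {Ω : Type*} [MeasurableSpace Ω] (μ : Measure Ω) [IsProbabilityMeasure μ]
    (X : ℕ → Ω → ℤ × ℤ)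
    (hmeas : ∀ n, Measurable (X n))
    (hindep : iIndepFun X μ)
    (hident : ∀ n, IdentDistrib (X n) (X 0) μ μ)
    (hsq : Integrable (fun ω => ((X 0 ω).1 : ℝ) ^ 2 + ((X 0 ω).2 : ℝ) ^ 2) μ)
    (hsymm : Measure.map (X 0) μ = Measure.map (fun ω => -(X 0 ω)) μ)
    (S : ℕ → Ω → ℤ × ℤ)
    (hS : ∀ n ω, S n ω = ∑ k ∈ Finset.range n, X k ω) :
    ∃ C : ℝ, 0 < C ∧ ∃ N : ℕ, ∀ n : ℕ, N ≤ n →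
      ENNReal.ofReal (C / n) ≤ μ {ω | S (2 * n) ω = 0} := by
  have hsymm' : IdentDistrib (X 0) (fun ω => -X 0 ω) μ μ :=
    ⟨(hmeas 0).aemeasurable, (hmeas 0).neg.aemeasurable, hsymm⟩
  obtain ⟨h₁, h₂⟩ := memLp_two_fst_snd_of_integrable (hmeas 0) hsq
  set v := variance (fun ω => ((X 0 ω).1 : ℝ)) μ + variance (fun ω => ((X 0 ω).2 : ℝ)) μ
  set c : ℕ := ⌈2 * v⌉₊ + 1
  have hv : 0 ≤ v := add_nonneg (variance_nonneg _ _) (variance_nonneg _ _)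
  have hc : 2 * v ≤ c := by push_cast [c]; linarith [Nat.le_ceil (2 * v)]
  refine ⟨1 / (64 * c ^ 2), by positivity, 1, fun n hn => ?_⟩
  set t := c * (Nat.sqrt n + 1)
  have hbox := half_le_map_sum_range_box hmeas hindep hident hsymm' h₁ h₂ n t (by positivity)
    (two_mul_mul_le_sq_mul_sqrt_succ hv hc n)
  have hC : 1 / (64 * c ^ 2) / (n : ℝ) = ((64 * c ^ 2 * n : ℕ) : ℝ)⁻¹ := by push_cast; ring
  simp only [hS]
  rw [measure_sum_range_two_mul_eq_zero hmeas hindep hident hsymm' n, hC,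
    ENNReal.ofReal_inv_of_pos (by positivity), ENNReal.ofReal_natCast]
  calc ((64 * c ^ 2 * n : ℕ) : ℝ≥0∞)⁻¹ ≤ (4 * #(Ioo (-(t : ℤ)) t ×ˢ Ioo (-(t : ℤ)) t) : ℝ≥0∞)⁻¹ :=
        ENNReal.inv_le_inv.2 (by exact_mod_cast four_mul_card_Ioo_neg_prod_le c hn)
    _ ≤ _ := inv_four_mul_card_le_tsum_sq _ hbox
end
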